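/- arXiv:1502.07290 — 2 statements merged into one kernel-verified Lean document; each statement's English description precedes it below -/
import Mathlib

section
/- The ground state energy blows up as the interval shrinks to a point: λ(t) → ∞ as t → a from the right. -/
open MeasureTheory Set

/-- Membership in the Sobolev space `H¹₀((a,t))`: `u` is continuous on `[a,t]`,
has derivative `u'` on `(a,t)` with `u'` square-integrable, and vanishes at both
endpoints. -/
def MemH10 (a t : ℝ) (u u' : ℝ → ℝ) : Prop :=
  ContinuousOn u (Set.Icc a t) ∧
  (∀ x ∈ Set.Ioo a t, HasDerivAt u (u' x) x) ∧
  IntervalIntegrable (fun x => (u' x) ^ 2) volume a t ∧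
  u a = 0 ∧ u t = 0

/-- The ground state energy
`λ(t) = inf { ∫_a^t ((u')² + V u²) : u ∈ H¹₀((a,t)), ∫_a^t u² = 1 }`. -/
noncomputable def groundStateEnergy (a : ℝ) (V : ℝ → ℝ) (t : ℝ) : ℝ :=
  sInf { E : ℝ | ∃ u u' : ℝ → ℝ, MemH10 a t u u' ∧
    (∫ x in a..t, (u x) ^ 2) = 1 ∧
    E = ∫ x in a..t, ((u' x) ^ 2 + V x * (u x) ^ 2) }

/-!
Since `u(a) = 0`, the fundamental theorem of calculus and `2 u u' ≤ u² + u'²` give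
`u(x)² ≤ ∫_a^t (u² + u'²)` on `[a,t]`; integrating over `[a,t]` yields, for normalized `u`,
`1 ≤ (t - a) (1 + ∫_a^t u'²)`. Hence the kinetic energy is at least `(t - a)⁻¹ - 1`, while the
potential energy is at least any lower bound `m` of `V` on `[a,b]`, so `λ(t) ≥ (t - a)⁻¹ - 1 + m`.
-/

open Filter Topology

namespace MemH10

variable {a t : ℝ} {u u' : ℝ → ℝ}

lemma const_mul (hu : MemH10 a t u u') (c : ℝ) :
    MemH10 a t (fun x => c * u x) (fun x => c * u' x) := by
  obtain ⟨hcont, hderiv, hint, hua, hut⟩ := hu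
  refine ⟨continuousOn_const.mul hcont, fun x hx => (hderiv x hx).const_mul c, ?_, ?_, ?_⟩
  · simpa only [mul_pow] using hint.const_mul (c ^ 2)
  · simp [hua]
  · simp [hut]

lemma intervalIntegrable_sq (hu : MemH10 a t u u') (hat : a ≤ t) :
    IntervalIntegrable (fun x => u x ^ 2) volume a t :=
  (hu.1.pow 2).intervalIntegrable_of_Icc hat

lemma intervalIntegrable_sq_add_sq (hu : MemH10 a t u u') (hat : a ≤ t) :
    IntervalIntegrable (fun x => u x ^ 2 + u' x ^ 2) volume a t :=
  (hu.intervalIntegrable_sq hat).add hu.2.2.1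

lemma sq_le_integral_sq_add_sq (hu : MemH10 a t u u') {x : ℝ} (hx : x ∈ Icc a t) :
    u x ^ 2 ≤ ∫ y in a..t, (u y ^ 2 + u' y ^ 2) := by
  have hint := hu.intervalIntegrable_sq_add_sq (hx.1.trans hx.2)
  obtain ⟨hcont, hderiv, -, hua, -⟩ := hu
  -- This form of the FTC only needs the upper bound `u² + u'²` of `(u²)' = 2 u u'` to be
  -- integrable, so the measurability of `u'` never comes up.
  have hFTC : u x ^ 2 - u a ^ 2 ≤ ∫ y in a..x, (u y ^ 2 + u' y ^ 2) := by
    refine intervalIntegral.sub_le_integral_of_hasDeriv_right_of_le hx.1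
      ((hcont.mono (Icc_subset_Icc_right hx.2)).pow 2)
      (fun y hy => ((hderiv y ⟨hy.1, hy.2.trans_le hx.2⟩).pow 2).hasDerivWithinAt)
      ?_ (fun y _ => ?_)
    · exact ((intervalIntegrable_iff_integrableOn_Icc_of_le (hx.1.trans hx.2)).1 hint).mono_set
        (Icc_subset_Icc_right hx.2)
    · simp only [Nat.cast_ofNat, Nat.add_one_sub_one, pow_one]
      nlinarith [sq_nonneg (u y - u' y)]
  have hmono : ∫ y in a..x, (u y ^ 2 + u' y ^ 2) ≤ ∫ y in a..t, (u y ^ 2 + u' y ^ 2) :=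
    intervalIntegral.integral_mono_interval le_rfl hx.1 hx.2
      (Eventually.of_forall fun y => by positivity) hint
  rw [hua] at hFTC
  linarith

lemma integral_sq_le (hu : MemH10 a t u u') (hat : a ≤ t) :
    ∫ x in a..t, u x ^ 2 ≤ (t - a) * ∫ x in a..t, (u x ^ 2 + u' x ^ 2) := by
  have := intervalIntegral.integral_mono_on hat (hu.intervalIntegrable_sq hat)
    intervalIntegrable_const fun x hx => hu.sq_le_integral_sq_add_sq hx
  rwa [intervalIntegral.integral_const, smul_eq_mul] at this

lemma inv_sub_one_le_integral_deriv_sq (hu : MemH10 a t u u') (hat : a < t)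
    (hnorm : ∫ x in a..t, u x ^ 2 = 1) :
    (t - a)⁻¹ - 1 ≤ ∫ x in a..t, u' x ^ 2 := by
  have := hu.integral_sq_le hat.le
  rw [intervalIntegral.integral_add (hu.intervalIntegrable_sq hat.le) hu.2.2.1, hnorm] at this
  have := (inv_le_iff_one_le_mul₀' (sub_pos.2 hat)).2 this
  linarith

end MemH10

lemma memH10_mul_sub_mul_sub (a t : ℝ) :
    MemH10 a t (fun x => (x - a) * (t - x)) (fun x => t + a - 2 * x) :=
  ⟨by fun_prop,
    fun x _ => (((hasDerivAt_id' x).sub_const a).mul ((hasDerivAt_id' x).const_sub t)).congr_deriv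
      (by ring),
    (by fun_prop : Continuous _).intervalIntegrable _ _, by simp, by simp⟩

lemma MemH10.exists_integral_sq_eq_one {a t : ℝ} {u u' : ℝ → ℝ} (hu : MemH10 a t u u')
    (hpos : 0 < ∫ x in a..t, u x ^ 2) :
    ∃ v v' : ℝ → ℝ, MemH10 a t v v' ∧ ∫ x in a..t, v x ^ 2 = 1 := by
  refine ⟨_, _, hu.const_mul (√(∫ x in a..t, u x ^ 2))⁻¹, ?_⟩
  simp only [mul_pow, intervalIntegral.integral_const_mul, inv_pow, Real.sq_sqrt hpos.le]
  exact inv_mul_cancel₀ hpos.ne'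

lemma exists_memH10_integral_sq_eq_one {a t : ℝ} (hat : a < t) :
    ∃ u u' : ℝ → ℝ, MemH10 a t u u' ∧ ∫ x in a..t, u x ^ 2 = 1 :=
  (memH10_mul_sub_mul_sub a t).exists_integral_sq_eq_one <|
    intervalIntegral.intervalIntegral_pos_of_pos_on
      ((memH10_mul_sub_mul_sub a t).intervalIntegrable_sq hat.le)
      (fun _ hx => pow_pos (mul_pos (sub_pos.2 hx.1) (sub_pos.2 hx.2)) 2) hat

lemma le_groundStateEnergy {a t m : ℝ} {V : ℝ → ℝ} (hat : a < t)
    (hV : ContinuousOn V (Icc a t)) (hm : ∀ x ∈ Icc a t, m ≤ V x) :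
    (t - a)⁻¹ - 1 + m ≤ groundStateEnergy a V t := by
  obtain ⟨u, u', hu, hnorm⟩ := exists_memH10_integral_sq_eq_one hat
  refine le_csInf ⟨_, u, u', hu, hnorm, rfl⟩ ?_
  rintro E ⟨u, u', hu, hnorm, rfl⟩
  have hVu : IntervalIntegrable (fun x => V x * u x ^ 2) volume a t :=
    (hV.mul (hu.1.pow 2)).intervalIntegrable_of_Icc hat.le
  have hpot : m ≤ ∫ x in a..t, V x * u x ^ 2 := by
    have := intervalIntegral.integral_mono_on hat.le
      ((hu.intervalIntegrable_sq hat.le).const_mul m) hVu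
      fun x hx => mul_le_mul_of_nonneg_right (hm x hx) (sq_nonneg (u x))
    rwa [intervalIntegral.integral_const_mul, hnorm, mul_one] at this
  rw [intervalIntegral.integral_add hu.2.2.1 hVu]
  linarith [hu.inv_sub_one_le_integral_deriv_sq hat hnorm]

theorem ground_state_tendsto_atTop_general (a b : ℝ)
    (V : ℝ → ℝ) (hV : ContinuousOn V (Set.Icc a b)) :
    Filter.Tendsto (groundStateEnergy a V) (nhdsWithin a (Set.Ioc a b)) Filter.atTop := by
  obtain ⟨m, hm⟩ := isCompact_Icc.bddBelow_image hV
  have hsub : Tendsto (fun t => t - a) (𝓝[Ioc a b] a) (𝓝[>] 0) :=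
    tendsto_nhdsWithin_of_tendsto_nhds_of_eventually_within _
      (tendsto_nhdsWithin_of_tendsto_nhds (by simpa using (continuous_sub_right a).tendsto a))
      (eventually_nhdsWithin_of_forall fun t ht => sub_pos.2 ht.1)
  have hlower : Tendsto (fun t => (t - a)⁻¹ - 1 + m) (𝓝[Ioc a b] a) atTop :=
    tendsto_atTop_add_const_right _ m
      (tendsto_atTop_add_const_right _ (-1) (tendsto_inv_nhdsGT_zero.comp hsub))
  refine tendsto_atTop_mono' _ ?_ hlower
  filter_upwards [self_mem_nhdsWithin] with t ⟨hat, htb⟩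
  exact le_groundStateEnergy hat (hV.mono (Icc_subset_Icc_right htb))
    fun x hx => hm ⟨x, Icc_subset_Icc_right htb hx, rfl⟩

/-- the ground state energy blows up as the interval shrinks to a point:
`λ(t) → ∞` as `t → a⁺`. -/
theorem ground_state_tendsto_atTop (a b : ℝ) (hab : a < b)
    (V : ℝ → ℝ) (hV : ContinuousOn V (Set.Icc a b)) :
    Filter.Tendsto (groundStateEnergy a V) (nhdsWithin a (Set.Ioc a b)) Filter.atTop :=
  ground_state_tendsto_atTop_general a b V hV
end

section
/- Alternative formula for the eigenvalue derivative: for every t ∈ (a,b), λ'(t) = ∫_a^t V'(x) u(t,x)² dx − (∂ₓu(t,a))², where ∂ₓu(t,a) denotes the spatial derivative of u(t,·) at x = a. -/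
/-!
For a solution of `-φ'' + V φ = μ φ` the energy `(V - μ) φ² - φ'²` has derivative `V' φ²`, so
the Dirichlet conditions give `∫_a^t V' u(t,·)² = ∂ₓu(t,a)² - ∂ₓu(t,t)²`. Comparing the
eigenfunctions on `[a,s]` and `[a,t]` through their Wronskian gives
`(λ(s) - λ(t)) ∫_a^s u(t,·) u(s,·) = -u(t,s) ∂ₓu(s,s)`; dividing by `s - t` and letting `s → t⁻`
yields Hadamard's formula `λ'(t) = -(∂ₓu(t,t))²`.
-/

open MeasureTheory Set Topology Filter

theorem ContDiffOn.differentiableAt_deriv {𝕜 F : Type*} [NontriviallyNormedField 𝕜]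
    [NormedAddCommGroup F] [NormedSpace 𝕜 F] {f : 𝕜 → F} {s : Set 𝕜} (hf : ContDiffOn 𝕜 2 f s)
    (hs : IsOpen s) {x : 𝕜} (hx : x ∈ s) : DifferentiableAt 𝕜 (deriv f) x :=
  ((hf.deriv_of_isOpen hs (m := 1) (by norm_num)).differentiableOn one_ne_zero).differentiableAt
    (hs.mem_nhds hx)

theorem ContDiff.of_uncurry {𝕜 E F G : Type*} [NontriviallyNormedField 𝕜]
    [NormedAddCommGroup E] [NormedSpace 𝕜 E] [NormedAddCommGroup F] [NormedSpace 𝕜 F]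
    [NormedAddCommGroup G] [NormedSpace 𝕜 G] {n : WithTop ℕ∞} {u : E → F → G}
    (hu : ContDiff 𝕜 n (Function.uncurry u)) (s : E) : ContDiff 𝕜 n (u s) :=
  hu.comp (contDiff_const.prodMk contDiff_id)

section Schrodinger

variable {V φ ψ : ℝ → ℝ} {μ ν a b : ℝ}

theorem integral_deriv_mul_sq_eq_of_schrodinger (hab : a ≤ b) (hV : ContDiff ℝ 1 V)
    (hφ : ContDiff ℝ 1 φ) (hφ₂ : ∀ x ∈ Ioo a b, DifferentiableAt ℝ (deriv φ) x)
    (hφeq : ∀ x ∈ Ioo a b, -deriv (deriv φ) x + V x * φ x = μ * φ x) :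
    ∫ x in a..b, deriv V x * φ x ^ 2
      = (deriv φ a ^ 2 - (V a - μ) * φ a ^ 2) - (deriv φ b ^ 2 - (V b - μ) * φ b ^ 2) := by
  have hV₀ := hV.continuous
  have hφ₀ := hφ.continuous
  have hV' := hV.continuous_deriv le_rfl
  have hφ' := hφ.continuous_deriv le_rfl
  have hint : Continuous fun x => deriv V x * φ x ^ 2 := by fun_prop
  rw [intervalIntegral.integral_eq_sub_of_hasDerivAt_of_le hab
    (f := fun x => (V x - μ) * φ x ^ 2 - deriv φ x ^ 2) (by fun_prop) ?_
    (hint.intervalIntegrable a b)]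
  · ring
  intro x hx
  have hVx := ((hV.differentiable one_ne_zero x).hasDerivAt).sub_const μ
  have hφx := (hφ.differentiable one_ne_zero x).hasDerivAt
  convert (hVx.fun_mul (hφx.fun_pow 2)).fun_sub ((hφ₂ x hx).hasDerivAt.fun_pow 2) using 1
  simp only [Nat.cast_ofNat, Nat.add_one_sub_one, pow_one]
  linear_combination (-2 * deriv φ x) * hφeq x hx

noncomputable def wronskian (φ ψ : ℝ → ℝ) (x : ℝ) : ℝ := φ x * deriv ψ x - deriv φ x * ψ x

theorem sub_mul_integral_mul_eq_wronskian_sub (hab : a ≤ b)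
    (hφ : ContDiff ℝ 1 φ) (hψ : ContDiff ℝ 1 ψ)
    (hφ₂ : ∀ x ∈ Ioo a b, DifferentiableAt ℝ (deriv φ) x)
    (hψ₂ : ∀ x ∈ Ioo a b, DifferentiableAt ℝ (deriv ψ) x)
    (hφeq : ∀ x ∈ Ioo a b, -deriv (deriv φ) x + V x * φ x = μ * φ x)
    (hψeq : ∀ x ∈ Ioo a b, -deriv (deriv ψ) x + V x * ψ x = ν * ψ x) :
    (ν - μ) * ∫ x in a..b, φ x * ψ x = wronskian φ ψ a - wronskian φ ψ b := by
  have hφ₀ := hφ.continuous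
  have hψ₀ := hψ.continuous
  have hφ' := hφ.continuous_deriv le_rfl
  have hψ' := hψ.continuous_deriv le_rfl
  have hint : Continuous fun x => (ν - μ) * (φ x * ψ x) := by fun_prop
  rw [← intervalIntegral.integral_const_mul, intervalIntegral.integral_eq_sub_of_hasDerivAt_of_le
    hab (f := fun x => deriv φ x * ψ x - φ x * deriv ψ x) (by fun_prop) ?_
    (hint.intervalIntegrable a b)]
  · simp only [wronskian]
    ring
  intro x hx
  have hφx := (hφ.differentiable one_ne_zero x).hasDerivAt
  have hψx := (hψ.differentiable one_ne_zero x).hasDerivAt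
  convert ((hφ₂ x hx).hasDerivAt.fun_mul hψx).fun_sub (hφx.fun_mul (hψ₂ x hx).hasDerivAt) using 1
  linear_combination ψ x * hφeq x hx - φ x * hψeq x hx

end Schrodinger

theorem deriv_eq_neg_sq_of_wronskian_identity {lam : ℝ → ℝ} {u : ℝ → ℝ → ℝ} {a t : ℝ}
    (hat : a < t) (hlam : DifferentiableAt ℝ lam t) (hu : ContDiff ℝ 1 (Function.uncurry u))
    (hnorm : ∫ x in a..t, u t x ^ 2 = 1) (hut : u t t = 0)
    (hW : ∀ s ∈ Ioo a t, (lam s - lam t) * ∫ x in a..s, u t x * u s x = -(u t s * deriv (u s) s)) :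
    deriv lam t = -deriv (u t) t ^ 2 := by
  let overlap s := ∫ x in a..s, u t x * u s x
  have hoverlap : Tendsto overlap (𝓝 t) (𝓝 1) := by
    have hcont : Continuous overlap :=
      intervalIntegral.continuous_parametric_intervalIntegral_of_continuous
        (by have := hu.continuous; fun_prop) continuous_id
    simpa [overlap, ← sq, hnorm] using hcont.tendsto t
  have hdiag : Tendsto (fun s => deriv (u s) s) (𝓝 t) (𝓝 (deriv (u t) t)) :=
    (hu.fderiv_apply contDiff_id contDiff_const (n := 0) (by norm_num)).continuous.tendsto t
  have hlim_lam : Tendsto (fun s => slope lam t s * overlap s) (𝓝[<] t) (𝓝 (deriv lam t * 1)) :=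
    (hlam.hasDerivAt.tendsto_slope.mono_left (nhdsLT_le_nhdsNE t)).mul
      (hoverlap.mono_left nhdsWithin_le_nhds)
  have hlim_u : Tendsto (fun s => -(slope (u t) t s * deriv (u s) s)) (𝓝[<] t)
      (𝓝 (-(deriv (u t) t * deriv (u t) t))) :=
    ((((hu.of_uncurry t).differentiable one_ne_zero t).hasDerivAt.tendsto_slope.mono_left
      (nhdsLT_le_nhdsNE t)).mul (hdiag.mono_left nhdsWithin_le_nhds)).neg
  have heq : (fun s => slope lam t s * overlap s)
      =ᶠ[𝓝[<] t] fun s => -(slope (u t) t s * deriv (u s) s) := by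
    filter_upwards [Ioo_mem_nhdsLT hat] with s hs
    have hst : s - t ≠ 0 := sub_ne_zero.mpr hs.2.ne
    simp only [slope_def_field, hut, sub_zero]
    field_simp
    linear_combination hW s hs
  linear_combination tendsto_nhds_unique (hlim_lam.congr' heq) hlim_u

theorem eigenvalue_derivative_formula_general
    (V : ℝ → ℝ) (hV : ContDiff ℝ 1 V)
    (a b : ℝ)
    (lam : ℝ → ℝ) (hlam : ∀ t ∈ Set.Ioo a b, DifferentiableAt ℝ lam t)
    (u : ℝ → ℝ → ℝ)
    (hC1 : ContDiff ℝ 1 (Function.uncurry u))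
    (htwice : ∀ t ∈ Set.Ioo a b, ContDiffOn ℝ 2 (u t) (Set.Icc a t))
    (heq : ∀ t ∈ Set.Ioo a b, ∀ x ∈ Set.Ioo a t,
      -(deriv (deriv (u t)) x) + V x * u t x = lam t * u t x)
    (hbca : ∀ t ∈ Set.Ioo a b, u t a = 0)
    (hbct : ∀ t ∈ Set.Ioo a b, u t t = 0)
    (hnorm : ∀ t ∈ Set.Ioo a b, (∫ x in a..t, (u t x) ^ 2) = 1)
    :
    ∀ t ∈ Set.Ioo a b,
      deriv lam t = (∫ x in a..t, deriv V x * (u t x) ^ 2) - (deriv (u t) a) ^ 2 := by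
  intro t ht
  have hu₂ : ∀ s ∈ Ioo a b, ∀ x ∈ Ioo a s, DifferentiableAt ℝ (deriv (u s)) x := fun s hs x hx =>
    ((htwice s hs).mono Ioo_subset_Icc_self).differentiableAt_deriv isOpen_Ioo hx
  have hHadamard : deriv lam t = -deriv (u t) t ^ 2 := by
    refine deriv_eq_neg_sq_of_wronskian_identity ht.1 (hlam t ht) hC1 (hnorm t ht) (hbct t ht)
      fun s hs => ?_
    have hsb : s ∈ Ioo a b := ⟨hs.1, hs.2.trans ht.2⟩
    rw [sub_mul_integral_mul_eq_wronskian_sub hs.1.le (hC1.of_uncurry t) (hC1.of_uncurry s)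
      (fun x hx => hu₂ t ht x ⟨hx.1, hx.2.trans hs.2⟩) (hu₂ s hsb)
      (fun x hx => heq t ht x ⟨hx.1, hx.2.trans hs.2⟩) (heq s hsb)]
    simp [wronskian, hbca t ht, hbca s hsb, hbct s hsb]
  rw [integral_deriv_mul_sq_eq_of_schrodinger ht.1.le hV (hC1.of_uncurry t) (hu₂ t ht) (heq t ht),
    hbca t ht, hbct t ht, hHadamard]
  ring

/-- alternative formula for the eigenvalue derivative:
`λ'(t) = ∫_a^t V'(x) u(t,x)² dx - (∂ₓu(t,a))²`. -/
theorem eigenvalue_derivative_formula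
    (V : ℝ → ℝ) (hV : ContDiff ℝ 1 V)
    (a b : ℝ) (hab : a < b)
    (lam : ℝ → ℝ) (hlam : ∀ t ∈ Set.Ioo a b, DifferentiableAt ℝ lam t)
    (u : ℝ → ℝ → ℝ)
    (hC1 : ContDiff ℝ 1 (Function.uncurry u))
    (huxx : Continuous (fun p : ℝ × ℝ => deriv (deriv (u p.1)) p.2))
    (hutx : Continuous (fun p : ℝ × ℝ => deriv (fun s => deriv (u s) p.2) p.1))
    (htwice : ∀ t ∈ Set.Ioo a b, ContDiffOn ℝ 2 (u t) (Set.Icc a t))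
    (heq : ∀ t ∈ Set.Ioo a b, ∀ x ∈ Set.Ioo a t,
      -(deriv (deriv (u t)) x) + V x * u t x = lam t * u t x)
    (hbca : ∀ t ∈ Set.Ioo a b, u t a = 0)
    (hbct : ∀ t ∈ Set.Ioo a b, u t t = 0)
    (hnorm : ∀ t ∈ Set.Ioo a b, (∫ x in a..t, (u t x) ^ 2) = 1)
    :
    ∀ t ∈ Set.Ioo a b,
      deriv lam t = (∫ x in a..t, deriv V x * (u t x) ^ 2) - (deriv (u t) a) ^ 2 :=
  eigenvalue_derivative_formula_general V hV a b lam hlam u hC1 htwice heq hbca hbct hnorm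
end
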